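/- arXiv:0904.3433 — 2 statements merged into one kernel-verified Lean document; each statement's English description precedes it below -/
import Mathlib

section
/- Let {a_{i,1}}_{i∈[s]} and {a_{i,2}}_{i∈[s]} be natural numbers with sums at most t₁ and t₂ respectively, set t := t₁ + t₂, and let S ≤ t be such that a_{i,1} + a_{i,2} ≤ S for all i ∈ [s]. Let F be a nonempty fork system with ratio at most r and with bipartition classes V₁(F) (the prongs) and V₂(F) (the centers), where |V₁(F)| ≥ |V₂(F)|, and let |F| denote the size of F. Then there is a mapping φ: [s]×[2] → V₁(F) ∪ V₂(F) such that for all i ∈ [s] the pair {φ(i,1), φ(i,2)} is an edge of F with φ(i,1) ∈ V₁(F) and φ(i,2) ∈ V₂(F), and such that for every v₁ ∈ V₁(F) the sum of a_{i,1} over all i with φ(i,1) = v₁ is at most t₁/|F| + √(12·t·S·|F|), and for every v₂ ∈ V₂(F) the sum of a_{i,2} over all i with φ(i,2) = v₂ is at most r·t₂/|F| + √(12·t·S·|F|). -/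
open SimpleGraph

/-- Vertex set of the complete tripartite graph `K_{n,n,n}`. -/
abbrev TriV (n : ℕ) := (Σ _ : Fin 3, Fin n)

/-- The complete tripartite graph `K_{n,n,n}`. -/
def triK (n : ℕ) : SimpleGraph (TriV n) := completeMultipartiteGraph (fun _ : Fin 3 => Fin n)

/-- The spanning subgraph of a coloured graph formed by the edges of colour `c`. -/
def colSub {V : Type} (G : SimpleGraph V) (col : Sym2 V → Bool) (c : Bool) : SimpleGraph V where
  Adj u v := G.Adj u v ∧ col s(u, v) = c
  symm := by
    constructor
    intro u v h
    refine ⟨G.symm.symm _ _ h.1, ?_⟩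
    rw [Sym2.eq_swap]
    exact h.2
  loopless := ⟨fun v h => G.loopless.irrefl v h.1⟩

/-- The class `𝒦ηₙ` of spanning subgraphs of `K_{n,n,n}` with minimum degree `> (2-η)n`. -/
def KK (n : ℕ) (η : ℝ) (K : SimpleGraph (TriV n)) : Prop :=
  K ≤ triK n ∧ ∀ v : TriV n, (2 - η) * n < (({u | K.Adj v u} : Set (TriV n)).ncard : ℝ)

/-- `M` is a matching in the graph `G`: a set of pairwise vertex-disjoint edges of `G`. -/
def IsMatching' {V : Type} (G : SimpleGraph V) (M : Finset (Sym2 V)) : Prop :=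
  (∀ e ∈ M, e ∈ G.edgeSet) ∧
    ∀ e ∈ M, ∀ f ∈ M, e ≠ f → ∀ v : V, v ∈ e → v ∉ f

/-- `v` is covered by the matching `M`. -/
def MCovers {V : Type} (M : Finset (Sym2 V)) (v : V) : Prop := ∃ e ∈ M, v ∈ e

/-- The matching `M` is connected in `G`: all covered vertices lie in one component of `G`. -/
def MatchConnected {V : Type} (G : SimpleGraph V) (M : Finset (Sym2 V)) : Prop :=
  ∀ u v : V, MCovers M u → MCovers M v → G.Reachable u v

/-- The matching `M` is odd: the component of `G` containing it has an odd cycle. -/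
def MatchOdd {V : Type} (G : SimpleGraph V) (M : Finset (Sym2 V)) : Prop :=
  ∃ (u : V) (p : G.Walk u u), p.IsCycle ∧ Odd p.length ∧
    ∃ v : V, MCovers M v ∧ G.Reachable u v

/-- A coloured graph is `m`-odd if some colour contains an odd connected matching of
size at least `m`. -/
def mOdd (n : ℕ) (K : SimpleGraph (TriV n)) (col : Sym2 (TriV n) → Bool) (m : ℝ) : Prop :=
  ∃ (c : Bool) (M : Finset (Sym2 (TriV n))),
    IsMatching' (colSub K col c) M ∧ MatchConnected (colSub K col c) M ∧
      MatchOdd (colSub K col c) M ∧ m ≤ (M.card : ℝ)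

/-- A fork system of ratio at most `r` in `G`: each element is a fork given by its center
and its (nonempty) set of at most `r` prongs; the forks are pairwise vertex-disjoint. -/
def IsForkSystem {V : Type} (G : SimpleGraph V) (r : ℕ) (F : Finset (V × Finset V)) : Prop :=
  (∀ p ∈ F, p.2.Nonempty ∧ p.1 ∉ p.2 ∧ p.2.card ≤ r ∧ ∀ v ∈ p.2, G.Adj p.1 v) ∧
    ∀ p ∈ F, ∀ q ∈ F, p ≠ q → ∀ v : V, (v = p.1 ∨ v ∈ p.2) → ¬(v = q.1 ∨ v ∈ q.2)

/-- `v` is covered by the fork system `F`. -/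
def FCovers {V : Type} (F : Finset (V × Finset V)) (v : V) : Prop :=
  ∃ p ∈ F, v = p.1 ∨ v ∈ p.2

/-- The fork system `F` is connected in `G`. -/
def ForkConnected {V : Type} (G : SimpleGraph V) (F : Finset (V × Finset V)) : Prop :=
  ∀ u v : V, FCovers F u → FCovers F v → G.Reachable u v

/-- The size of a fork system: the total number of prongs. -/
def forkSize {V : Type} (F : Finset (V × Finset V)) : ℕ := ∑ p ∈ F, p.2.card

/-- A coloured graph is `(m,f,r)`-good if some colour contains a connected matching of size
at least `m` and a connected fork system of ratio at most `r` and size at least `f`. -/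
def Good (n : ℕ) (K : SimpleGraph (TriV n)) (col : Sym2 (TriV n) → Bool)
    (m f : ℝ) (r : ℕ) : Prop :=
  ∃ c : Bool,
    (∃ M, IsMatching' (colSub K col c) M ∧ MatchConnected (colSub K col c) M ∧
      m ≤ (M.card : ℝ)) ∧
    (∃ F, IsForkSystem (colSub K col c) r F ∧ ForkConnected (colSub K col c) F ∧
      f ≤ (forkSize F : ℝ))

/-- `K[D,D']` is `η`-complete w.r.t. `n`: every vertex of either side has at most `ηn`
non-neighbours on the other side. -/
def EtaComplete {V : Type} (K : SimpleGraph V) (n : ℕ) (η : ℝ) (D D' : Finset V) : Prop :=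
  (∀ v ∈ D, (({u | u ∈ D' ∧ ¬K.Adj v u} : Set V).ncard : ℝ) ≤ η * n) ∧
  (∀ v ∈ D', (({u | u ∈ D ∧ ¬K.Adj u v} : Set V).ncard : ℝ) ≤ η * n)

/-- `K[D,D']` is `(η,c)`-complete: `η`-complete and all its edges have colour `c`. -/
def EtaCComplete {V : Type} (K : SimpleGraph V) (col : Sym2 V → Bool) (n : ℕ) (η : ℝ)
    (c : Bool) (D D' : Finset V) : Prop :=
  EtaComplete K n η D D' ∧ ∀ u ∈ D, ∀ v ∈ D', K.Adj u v → col s(u, v) = c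

/-- Pyramid configuration with parameter `η` (Definition (E1)). -/
def PyramidConfig (n : ℕ) (K : SimpleGraph (TriV n)) (col : Sym2 (TriV n) → Bool)
    (η : ℝ) : Prop :=
  ∃ (c c' : Bool) (D1 D2 D1' D2' : Finset (TriV n)),
    Disjoint D1 D2 ∧ Disjoint D1 D1' ∧ Disjoint D1 D2' ∧ Disjoint D2 D1' ∧
      Disjoint D2 D2' ∧ Disjoint D1' D2' ∧
    D1.card ≤ n ∧ D2.card ≤ n ∧ D1'.card ≤ n ∧ D2'.card ≤ n ∧
    (1 - η) * n ≤ (D1.card : ℝ) ∧ (1 - η) * n ≤ (D2.card : ℝ) ∧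
    (1 - η) * n ≤ (D1'.card : ℝ) + (D2'.card : ℝ) ∧
    (D1' = ∅ ∨ 2 * η * n ≤ (D1'.card : ℝ)) ∧
    (D2' = ∅ ∨ 2 * η * n ≤ (D2'.card : ℝ)) ∧
    EtaCComplete K col n η c D1 D1' ∧ EtaCComplete K col n η c D2 D2' ∧
    EtaComplete K n η D1 D2' ∧ EtaComplete K n η D2 D1' ∧ EtaComplete K n η D1 D2 ∧
    (EtaCComplete K col n η c' D1 D2 ∨
      (EtaCComplete K col n η c' D1 D2' ∧ EtaCComplete K col n η c' D1' D2))

/-- Crossing relation of the six bipartite graphs in the spider configuration. -/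
def spiderCross {V : Type} (A1 A2 B1 B2 C1 C2 : Finset V) (u v : V) : Prop :=
  (u ∈ A1 ∧ (v ∈ B2 ∨ v ∈ C2)) ∨ (u ∈ B1 ∧ (v ∈ A2 ∨ v ∈ C2)) ∨
    (u ∈ C1 ∧ (v ∈ A2 ∨ v ∈ B2))

/-- The union of the six bipartite graphs in the spider configuration, as a graph. -/
def spiderGraph {V : Type} (K : SimpleGraph V) (A1 A2 B1 B2 C1 C2 : Finset V) :
    SimpleGraph V where
  Adj u v := K.Adj u v ∧
    (spiderCross A1 A2 B1 B2 C1 C2 u v ∨ spiderCross A1 A2 B1 B2 C1 C2 v u)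
  symm := by
    constructor
    intro u v h
    exact ⟨h.1.symm, h.2.symm⟩
  loopless := ⟨fun v h => K.loopless.irrefl v h.1⟩

/-- Spider configuration with parameter `η` (Definition (E2)). -/
def SpiderConfig (n : ℕ) (K : SimpleGraph (TriV n)) (col : Sym2 (TriV n) → Bool)
    (η : ℝ) : Prop :=
  ∃ (c : Bool) (A1 A2 B1 B2 C1 C2 : Finset (TriV n)),
    List.Pairwise Disjoint [A1, A2, B1, B2, C1, C2] ∧
    (1 - η) * n ≤ ((A1 ∪ A2).card : ℝ) ∧ (1 - η) * n ≤ ((B1 ∪ B2).card : ℝ) ∧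
      (1 - η) * n ≤ ((C1 ∪ C2).card : ℝ) ∧
    EtaCComplete K col n η c A1 B2 ∧ EtaCComplete K col n η c A1 C2 ∧
    EtaCComplete K col n η c B1 A2 ∧ EtaCComplete K col n η c B1 C2 ∧
    EtaCComplete K col n η c C1 A2 ∧ EtaCComplete K col n η c C1 B2 ∧
    (∀ u ∈ A1 ∪ B1 ∪ C1 ∪ A2 ∪ B2 ∪ C2, ∀ v ∈ A1 ∪ B1 ∪ C1 ∪ A2 ∪ B2 ∪ C2,
      (spiderGraph K A1 A2 B1 B2 C1 C2).Reachable u v) ∧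
    ∃ AB AC BA BC CA CB CC : Finset (TriV n),
      A2 = AB ∪ AC ∧ Disjoint AB AC ∧
      B2 = BA ∪ BC ∧ Disjoint BA BC ∧
      C2 = CA ∪ CB ∪ CC ∧ Disjoint CA CB ∧ Disjoint CA CC ∧ Disjoint CB CC ∧
      (AB = ∅ ∨ 2 * η * n ≤ (AB.card : ℝ)) ∧ (AC = ∅ ∨ 2 * η * n ≤ (AC.card : ℝ)) ∧
      (BA = ∅ ∨ 2 * η * n ≤ (BA.card : ℝ)) ∧ (BC = ∅ ∨ 2 * η * n ≤ (BC.card : ℝ)) ∧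
      (CA = ∅ ∨ 2 * η * n ≤ (CA.card : ℝ)) ∧ (CB = ∅ ∨ 2 * η * n ≤ (CB.card : ℝ)) ∧
      (CC = ∅ ∨ 2 * η * n ≤ (CC.card : ℝ)) ∧
      B1.card ≤ A1.card ∧ (C1 ∪ CC).card ≤ B1.card ∧
      AB.card = BA.card ∧ (AB.card : ℝ) ≤ n - (C2.card : ℝ) ∧
      AC.card = CA.card ∧ (AC.card : ℝ) ≤ n - (B2.card : ℝ) ∧
      BC.card = CB.card ∧ (BC.card : ℝ) ≤ n - (A2.card : ℝ) ∧
      (CC = ∅ ∨ AB = ∅) ∧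
      (A2 = ∅ ∨ ((A2 ∪ B2 ∪ CA ∪ CB).card : ℝ) ≤ (1 - η) * (3 / 2) * n) ∧
      (C1 = ∅ ∨ ((A1 ∪ B1 ∪ C1).card : ℝ) < (1 - η) * (3 / 2) * n ∨
        ((B1 ∪ C1).card : ℝ) ≤ (1 - η) * (3 / 4) * n)

/-- A coloured graph is `η`-extremal if it is in pyramid or spider configuration. -/
def Extremal (n : ℕ) (K : SimpleGraph (TriV n)) (col : Sym2 (TriV n) → Bool)
    (η : ℝ) : Prop :=
  PyramidConfig n K col η ∨ SpiderConfig n K col η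

/-- The density of the pair of vertex sets `(U,W)` in `G`. -/
noncomputable def density {V : Type} (G : SimpleGraph V) (U W : Finset V) : ℝ :=
  (({p : V × V | p.1 ∈ U ∧ p.2 ∈ W ∧ G.Adj p.1 p.2} : Set (V × V)).ncard : ℝ) /
    ((U.card : ℝ) * (W.card : ℝ))

/-- `(U,W)` is an `(ε,d)`-regular pair in `G`. -/
def IsRegularPair {V : Type} (G : SimpleGraph V) (ε d : ℝ) (U W : Finset V) : Prop :=
  d ≤ density G U W ∧
    ∀ U' ⊆ U, ∀ W' ⊆ W, ε * U.card ≤ (U'.card : ℝ) → ε * W.card ≤ (W'.card : ℝ) →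
      |density G U' W' - density G U W| ≤ ε

/-- `𝔾` is an `(ε,d)`-reduced graph of `G` with partition `V₀ ∪ V₁ ∪ ... ∪ V_k`
given by the bin set `V0` and the clusters `P i`. -/
def IsReducedGraph {V : Type} [Fintype V] (G : SimpleGraph V) (ε d : ℝ) (k : ℕ)
    (GG : SimpleGraph (Fin k)) (V0 : Finset V) (P : Fin k → Finset V) : Prop :=
  (∀ i, Disjoint V0 (P i)) ∧ (∀ i j, i ≠ j → Disjoint (P i) (P j)) ∧
    (∀ v : V, v ∈ V0 ∨ ∃ i, v ∈ P i) ∧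
    ((V0.card : ℝ) ≤ ε * Fintype.card V) ∧
    (∀ i j, (P i).card = (P j).card) ∧
    (∀ i j, GG.Adj i j → IsRegularPair G ε d (P i) (P j))

/-- The graph obtained from `G` by deleting the vertices in `C` (the deleted vertices
remain as isolated vertices). -/
def delVerts {V : Type} (G : SimpleGraph V) (C : Finset V) : SimpleGraph V where
  Adj u v := G.Adj u v ∧ u ∉ C ∧ v ∉ C
  symm := by
    constructor
    intro u v h
    exact ⟨h.1.symm, h.2.2, h.2.1⟩
  loopless := ⟨fun v h => G.loopless.irrefl v h.1⟩

/-- `C` is an `S`-cut of `T`: every component of `T - C` has at most `S` vertices. -/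
def IsCut {V : Type} (T : SimpleGraph V) (S : ℝ) (C : Finset V) : Prop :=
  ∀ v : V, v ∉ C →
    ((({u | (delVerts T C).Reachable u v} : Set V).ncard : ℝ)) ≤ S

/-- `h` is a `(ρ,L)`-valid assignment of `T` to `GG`. -/
def ValidAssignment {V W : Type} (T : SimpleGraph V) (GG : SimpleGraph W)
    (ρ L : ℝ) (h : V → W) : Prop :=
  (∀ u v : V, T.Adj u v → GG.Adj (h u) (h v)) ∧
  (∀ x : V, ({i | ∃ y : V, T.Adj x y ∧ h y = i} : Set W).ncard ≤ 2) ∧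
  (∀ i : W, (({x : V | h x = i} : Set V).ncard : ℝ) < (1 - ρ) * L)

/-- The bipartite graph `K[D,D']` formed by the edges of `K` between `D` and `D'`. -/
def bipBetween {V : Type} (K : SimpleGraph V) (D D' : Finset V) : SimpleGraph V where
  Adj u v := K.Adj u v ∧ ((u ∈ D ∧ v ∈ D') ∨ (u ∈ D' ∧ v ∈ D))
  symm := by
    constructor
    intro u v h
    refine ⟨h.1.symm, ?_⟩
    rcases h.2 with ⟨hu, hv⟩ | ⟨hu, hv⟩
    · exact Or.inr ⟨hv, hu⟩
    · exact Or.inl ⟨hv, hu⟩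
  loopless := ⟨fun v h => K.loopless.irrefl v h.1⟩

/-!
Cut every fork `p` into the slots `⟨p, v⟩`, `v` a prong of `p`; there are `f = |F|` of them.
Items are placed greedily, item `i` into a slot, adding `a i 0` to the load `L` of that
prong and `a i 1` to the load `C` of its fork. With `T₀, T₁` the totals placed so far, the
potential `∑ L² + ∑_p C_p² / w_p` (`w_p` the number of prongs of `p`) grows under the best
choice of slot by at most `2 (a₀ T₀ + a₁ T₁) / f + a₀² + a₁²`, because the linear part of the
growth averages to exactly that over the slots. So the potential exceeds its balanced value
`(T₀² + T₁²) / f` by at most `∑ᵢ (a i 0² + a i 1²) ≤ S t`, and this excess is the variance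
`∑ (L - T₀/f)² + ∑_p (C_p - w_p T₁/f)² / w_p`, which bounds every single deviation.
-/
open Finset

section Load

variable {ι α : Type*} [DecidableEq α]

noncomputable def load (I : Finset ι) (b : ι → ℝ) (g : ι → α) (y : α) : ℝ :=
  ∑ i ∈ I with g i = y, b i

lemma natCast_sum_ite_eq_load [Fintype ι] (b : ι → ℕ) (g : ι → α) (y : α) :
    ((∑ i, if g i = y then b i else 0 : ℕ) : ℝ) = load univ (fun i => (b i : ℝ)) g y := by
  push_cast
  rw [load, sum_filter]

lemma load_insert [DecidableEq ι] {I : Finset ι} {j : ι} (hj : j ∉ I) (b : ι → ℝ) (g : ι → α)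
    (y : α) : load (insert j I) b g y = load I b g y + if g j = y then b j else 0 := by
  unfold load
  rw [filter_insert]
  split_ifs with h
  · rw [sum_insert (by simp [hj]), add_comm]
  · rw [add_zero]

lemma load_congr {α' : Type*} [DecidableEq α'] {I : Finset ι} {g : ι → α} {g' : ι → α'}
    {y : α} {y' : α'} (h : ∀ i ∈ I, g i = y ↔ g' i = y') (b : ι → ℝ) :
    load I b g y = load I b g' y' :=
  sum_congr (filter_congr h) fun _ _ => rfl

lemma sum_load {I : Finset ι} {t : Finset α} {g : ι → α} (h : ∀ i ∈ I, g i ∈ t) (b : ι → ℝ) :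
    ∑ y ∈ t, load I b g y = ∑ i ∈ I, b i :=
  sum_fiberwise_of_maps_to h b

end Load

lemma sum_add_ite_sq_div {α : Type*} [DecidableEq α] {s : Finset α} {x : α} (hx : x ∈ s)
    (L w : α → ℝ) (u : ℝ) :
    ∑ y ∈ s, (L y + if x = y then u else 0) ^ 2 / w y
      = ∑ y ∈ s, L y ^ 2 / w y + (2 * u * L x + u ^ 2) / w x := by
  have h : ∀ y, (L y + if x = y then u else 0) ^ 2 / w y
      = L y ^ 2 / w y + if x = y then (2 * u * L y + u ^ 2) / w y else 0 := by
    intro y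
    split_ifs <;> ring
  simp only [h, sum_add_distrib, sum_ite_eq, if_pos hx]

lemma sum_sq_sub_mul_div {α : Type*} {s : Finset α} {w : α → ℝ} (hw : ∀ y ∈ s, w y ≠ 0)
    (C : α → ℝ) (m : ℝ) :
    ∑ y ∈ s, (C y - w y * m) ^ 2 / w y
      = ∑ y ∈ s, C y ^ 2 / w y - 2 * m * ∑ y ∈ s, C y + m ^ 2 * ∑ y ∈ s, w y := by
  rw [mul_sum, mul_sum, ← sum_sub_distrib, ← sum_add_distrib]
  refine sum_congr rfl fun y hy => ?_
  field_simp [hw y hy]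
  ring

lemma exists_le_sum_div_card {α : Type*} {s : Finset α} (hs : s.Nonempty) (g : α → ℝ) :
    ∃ x ∈ s, g x ≤ (∑ y ∈ s, g y) / #s := by
  refine exists_le_of_sum_le hs ?_
  rw [sum_const, nsmul_eq_mul, mul_div_cancel₀ _ (by exact_mod_cast hs.card_pos.ne')]

lemma sum_sq_add_sq_le_mul {ι : Type*} {s : Finset ι} {x y : ι → ℝ} {S : ℝ}
    (hx : ∀ i ∈ s, 0 ≤ x i) (hy : ∀ i ∈ s, 0 ≤ y i) (hS : ∀ i ∈ s, x i + y i ≤ S) :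
    ∑ i ∈ s, (x i ^ 2 + y i ^ 2) ≤ S * ∑ i ∈ s, (x i + y i) := by
  rw [mul_sum]
  refine sum_le_sum fun i hi => ?_
  nlinarith [hx i hi, hy i hi, hS i hi]

section Forks

variable {ι β γ : Type*} [DecidableEq β] [DecidableEq γ] (P : Finset β) (Q : β → Finset γ)

/-- `L` is indexed by the slots `⟨p, v⟩` (the prongs), `C` by the forks `p` (the centers). -/
noncomputable def forkPotential (L : (Σ _ : β, γ) → ℝ) (C : β → ℝ) : ℝ :=
  ∑ x ∈ P.sigma Q, L x ^ 2 + ∑ p ∈ P, C p ^ 2 / #(Q p)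

variable {P Q}

lemma exists_forkPotential_add_le (hP : P.Nonempty) (hQ : ∀ p ∈ P, (Q p).Nonempty)
    (L : (Σ _ : β, γ) → ℝ) (C : β → ℝ) (u₀ u₁ : ℝ) :
    ∃ x ∈ P.sigma Q,
      forkPotential P Q (fun y => L y + if x = y then u₀ else 0)
          (fun p => C p + if x.1 = p then u₁ else 0)
        ≤ forkPotential P Q L C
          + 2 * (u₀ * ∑ y ∈ P.sigma Q, L y + u₁ * ∑ p ∈ P, C p) / #(P.sigma Q)
          + u₀ ^ 2 + u₁ ^ 2 := by
  have hX : (P.sigma Q).Nonempty := by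
    obtain ⟨p, hp⟩ := hP
    exact sigma_nonempty.2 ⟨p, hp, hQ p hp⟩
  set g : (Σ _ : β, γ) → ℝ := fun x => u₀ * L x + u₁ * C x.1 / #(Q x.1)
  have hg : ∑ x ∈ P.sigma Q, g x = u₀ * ∑ y ∈ P.sigma Q, L y + u₁ * ∑ p ∈ P, C p := by
    have hC : ∑ x ∈ P.sigma Q, u₁ * C x.1 / #(Q x.1) = u₁ * ∑ p ∈ P, C p := by
      rw [sum_sigma, mul_sum]
      refine sum_congr rfl fun p hp => ?_
      dsimp only
      rw [sum_const, nsmul_eq_mul]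
      field_simp [(hQ p hp).card_pos.ne']
    rw [sum_add_distrib, ← mul_sum, hC]
  obtain ⟨x, hx, hgx⟩ := exists_le_sum_div_card hX g
  obtain ⟨hx₁, -⟩ := mem_sigma.1 hx
  refine ⟨x, hx, ?_⟩
  have hw : (1 : ℝ) ≤ #(Q x.1) := by exact_mod_cast (hQ x.1 hx₁).card_pos
  have hu₁ : u₁ ^ 2 / #(Q x.1) ≤ u₁ ^ 2 := div_le_self (sq_nonneg u₁) hw
  have hprongs := sum_add_ite_sq_div hx L (fun _ => 1) u₀
  have hcenters := sum_add_ite_sq_div hx₁ C (fun p => (#(Q p) : ℝ)) u₁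
  simp only [div_one] at hprongs
  rw [hg] at hgx
  simp only [g] at hgx
  unfold forkPotential
  rw [hprongs, hcenters]
  linear_combination 2 * hgx + hu₁

lemma exists_assignment_forkPotential_le [DecidableEq ι] (hP : P.Nonempty)
    (hQ : ∀ p ∈ P, (Q p).Nonempty) (I : Finset ι) (b₀ b₁ : ι → ℝ) :
    ∃ σ : ι → Σ _ : β, γ, (∀ i ∈ I, σ i ∈ P.sigma Q) ∧
      forkPotential P Q (load I b₀ σ) (load I b₁ fun i => (σ i).1)
        ≤ ((∑ i ∈ I, b₀ i) ^ 2 + (∑ i ∈ I, b₁ i) ^ 2) / #(P.sigma Q)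
          + ∑ i ∈ I, (b₀ i ^ 2 + b₁ i ^ 2) := by
  induction I using Finset.induction_on with
  | empty =>
    obtain ⟨p, hp⟩ := hP
    obtain ⟨v, -⟩ := hQ p hp
    refine ⟨fun _ => ⟨p, v⟩, by simp, ?_⟩
    simp [forkPotential, load]
  | insert j I hj ih =>
    obtain ⟨σ, hσ, hΦ⟩ := ih
    obtain ⟨x, hx, hstep⟩ := exists_forkPotential_add_le hP hQ
      (load I b₀ σ) (load I b₁ fun i => (σ i).1) (b₀ j) (b₁ j)
    set σ' := Function.update σ j x
    have hσ'j : σ' j = x := Function.update_self _ _ _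
    have hσ' : ∀ i ∈ I, σ' i = σ i := fun i hi =>
      Function.update_of_ne (ne_of_mem_of_not_mem hi hj) _ _
    refine ⟨σ', ?_, ?_⟩
    · intro i hi
      rcases mem_insert.1 hi with rfl | hi
      · rwa [hσ'j]
      · rw [hσ' i hi]
        exact hσ i hi
    · have hL : load (insert j I) b₀ σ'
          = fun y => load I b₀ σ y + if x = y then b₀ j else 0 := by
        ext y
        rw [load_insert hj, load_congr (fun i hi => by rw [hσ' i hi]), hσ'j]
      have hC : (load (insert j I) b₁ fun i => (σ' i).1)
          = fun p => load I b₁ (fun i => (σ i).1) p + if x.1 = p then b₁ j else 0 := by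
        ext p
        rw [load_insert hj, load_congr (g' := fun i => (σ i).1) (fun i hi => by rw [hσ' i hi]),
          hσ'j]
      rw [hL, hC, sum_insert hj, sum_insert hj, sum_insert hj]
      rw [sum_load hσ, sum_load (fun i hi => (mem_sigma.1 (hσ i hi)).1)] at hstep
      have hsq : 0 ≤ (b₀ j ^ 2 + b₁ j ^ 2) / #(P.sigma Q) := by positivity
      linear_combination hstep + hΦ + hsq

lemma exists_assignment_sum_sq_sub_le [DecidableEq ι] (hP : P.Nonempty)
    (hQ : ∀ p ∈ P, (Q p).Nonempty) (I : Finset ι) (b₀ b₁ : ι → ℝ) :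
    ∃ σ : ι → Σ _ : β, γ, (∀ i ∈ I, σ i ∈ P.sigma Q) ∧
      ∑ x ∈ P.sigma Q, (load I b₀ σ x - (∑ i ∈ I, b₀ i) / #(P.sigma Q)) ^ 2
        + ∑ p ∈ P, (load I b₁ (fun i => (σ i).1) p
            - #(Q p) * ((∑ i ∈ I, b₁ i) / #(P.sigma Q))) ^ 2 / #(Q p)
        ≤ ∑ i ∈ I, (b₀ i ^ 2 + b₁ i ^ 2) := by
  obtain ⟨σ, hσ, hΦ⟩ := exists_assignment_forkPotential_le hP hQ I b₀ b₁
  refine ⟨σ, hσ, ?_⟩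
  have hf : (#(P.sigma Q) : ℝ) ≠ 0 := by
    obtain ⟨p, hp⟩ := hP
    exact Nat.cast_ne_zero.2 (sigma_nonempty.2 ⟨p, hp, hQ p hp⟩).card_pos.ne'
  have hprongs := sum_sq_sub_mul_div (s := P.sigma Q) (w := fun _ => 1)
    (fun _ _ => one_ne_zero) (load I b₀ σ) ((∑ i ∈ I, b₀ i) / #(P.sigma Q))
  have hcenters := sum_sq_sub_mul_div (s := P) (w := fun p => (#(Q p) : ℝ))
    (fun p hp => Nat.cast_ne_zero.2 (hQ p hp).card_pos.ne') (load I b₁ fun i => (σ i).1)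
    ((∑ i ∈ I, b₁ i) / #(P.sigma Q))
  simp only [one_mul, div_one, sum_const, nsmul_eq_mul, mul_one] at hprongs
  rw [sum_load hσ] at hprongs
  rw [sum_load (fun i hi => (mem_sigma.1 (hσ i hi)).1), ← Nat.cast_sum, ← card_sigma] at hcenters
  unfold forkPotential at hΦ
  rw [hprongs, hcenters]
  field_simp at hΦ ⊢
  linarith

lemma exists_assignment_load_le [DecidableEq ι] (hP : P.Nonempty)
    (hQ : ∀ p ∈ P, (Q p).Nonempty) (I : Finset ι) (b₀ b₁ : ι → ℝ) :
    ∃ σ : ι → Σ _ : β, γ, (∀ i ∈ I, σ i ∈ P.sigma Q) ∧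
      (∀ x ∈ P.sigma Q, load I b₀ σ x
        ≤ (∑ i ∈ I, b₀ i) / #(P.sigma Q) + √(∑ i ∈ I, (b₀ i ^ 2 + b₁ i ^ 2))) ∧
      (∀ p ∈ P, load I b₁ (fun i => (σ i).1) p
        ≤ #(Q p) * ((∑ i ∈ I, b₁ i) / #(P.sigma Q))
          + √(#(Q p) * ∑ i ∈ I, (b₀ i ^ 2 + b₁ i ^ 2))) := by
  obtain ⟨σ, hσ, hvar⟩ := exists_assignment_sum_sq_sub_le hP hQ I b₀ b₁
  set D := ∑ i ∈ I, (b₀ i ^ 2 + b₁ i ^ 2)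
  have hprongs := (le_add_of_nonneg_right (sum_nonneg fun p _ => by positivity)).trans hvar
  have hcenters := (le_add_of_nonneg_left (sum_nonneg fun x _ => sq_nonneg _)).trans hvar
  refine ⟨σ, hσ, fun x hx => ?_, fun p hp => ?_⟩
  · have hsq := (single_le_sum (fun y _ => sq_nonneg _) hx).trans hprongs
    linarith [le_abs_self (load I b₀ σ x - (∑ i ∈ I, b₀ i) / #(P.sigma Q)), Real.abs_le_sqrt hsq]
  · have hw : (0 : ℝ) < #(Q p) := by exact_mod_cast (hQ p hp).card_pos
    have hsq := (single_le_sum (fun q _ => by positivity) hp).trans hcenters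
    rw [div_le_iff₀ hw, mul_comm D] at hsq
    linarith [le_abs_self (load I b₁ (fun i => (σ i).1) p
      - #(Q p) * ((∑ i ∈ I, b₁ i) / #(P.sigma Q))), Real.abs_le_sqrt hsq]

end Forks

section ForkSystem

variable {V : Type}

def ForksDisjoint (F : Finset (V × Finset V)) : Prop :=
  ∀ p ∈ F, ∀ q ∈ F, p ≠ q → ∀ v : V, (v = p.1 ∨ v ∈ p.2) → ¬(v = q.1 ∨ v ∈ q.2)

variable {F : Finset (V × Finset V)}

lemma ForksDisjoint.fst_eq_iff (hF : ForksDisjoint F) {p q : V × Finset V} (hp : p ∈ F)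
    (hq : q ∈ F) : p.1 = q.1 ↔ p = q :=
  ⟨fun h => by_contra fun hne => hF p hp q hq hne p.1 (Or.inl rfl) (Or.inl h),
    fun h => h ▸ rfl⟩

lemma ForksDisjoint.snd_eq_iff (hF : ForksDisjoint F) {x : Σ _ : V × Finset V, V}
    (hx : x ∈ F.sigma fun p => p.2) {p : V × Finset V} (hp : p ∈ F) {v : V} (hv : v ∈ p.2) :
    x.2 = v ↔ x = ⟨p, v⟩ := by
  obtain ⟨hx₁, hx₂⟩ := mem_sigma.1 hx
  refine ⟨fun h => ?_, fun h => h ▸ rfl⟩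
  have : x.1 = p := by_contra fun hne => hF x.1 hx₁ p hp hne v (Or.inr (h ▸ hx₂)) (Or.inr hv)
  exact Sigma.ext this (heq_of_eq h)

lemma card_le_forkSize {p : V × Finset V} (hp : p ∈ F) : #p.2 ≤ forkSize F :=
  single_le_sum (f := fun q => #q.2) (fun _ _ => Nat.zero_le _) hp

lemma ForksDisjoint.exists_assignment_load_le [DecidableEq V] {ι : Type*} [DecidableEq ι]
    (hdisj : ForksDisjoint F) (hF : F.Nonempty) (hne : ∀ p ∈ F, p.2.Nonempty) (I : Finset ι)
    (b₀ b₁ : ι → ℝ) :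
    ∃ φ : ι → Fin 2 → V, (∀ i ∈ I, ∃ p ∈ F, φ i 1 = p.1 ∧ φ i 0 ∈ p.2) ∧
      (∀ v ∈ F.biUnion fun p => p.2, load I b₀ (fun i => φ i 0) v
        ≤ (∑ i ∈ I, b₀ i) / forkSize F + √(∑ i ∈ I, (b₀ i ^ 2 + b₁ i ^ 2))) ∧
      (∀ p ∈ F, load I b₁ (fun i => φ i 1) p.1
        ≤ #p.2 * ((∑ i ∈ I, b₁ i) / forkSize F) + √(#p.2 * ∑ i ∈ I, (b₀ i ^ 2 + b₁ i ^ 2))) := by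
  obtain ⟨σ, hσ, hprong, hcenter⟩ := _root_.exists_assignment_load_le hF hne I b₀ b₁
  have hf : #(F.sigma fun p => p.2) = forkSize F := card_sigma _ _
  rw [hf] at hprong hcenter
  refine ⟨fun i => ![(σ i).2, (σ i).1.1], fun i hi => ?_, fun v hv => ?_, fun p hp => ?_⟩
  · obtain ⟨hi₁, hi₂⟩ := mem_sigma.1 (hσ i hi)
    exact ⟨(σ i).1, hi₁, rfl, hi₂⟩
  · obtain ⟨p, hp, hvp⟩ := mem_biUnion.1 hv
    calc _ = load I b₀ σ ⟨p, v⟩ := load_congr (fun i hi => hdisj.snd_eq_iff (hσ i hi) hp hvp) _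
      _ ≤ _ := hprong _ (mem_sigma.2 ⟨hp, hvp⟩)
  · calc _ = load I b₁ (fun i => (σ i).1) p :=
          load_congr (fun i hi => hdisj.fst_eq_iff (mem_sigma.1 (hσ i hi)).1 hp) _
      _ ≤ _ := hcenter p hp

end ForkSystem

theorem stmt9_general {V : Type} [DecidableEq V] (s t₁ t₂ S r : ℕ) (a : Fin s → Fin 2 → ℕ)
    (hsum1 : (∑ i, a i 0) ≤ t₁) (hsum2 : (∑ i, a i 1) ≤ t₂)
    (haS : ∀ i, a i 0 + a i 1 ≤ S)
    (F : Finset (V × Finset V)) (hF : F.Nonempty)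
    (hfork : ∀ p ∈ F, p.2.Nonempty ∧ p.1 ∉ p.2 ∧ p.2.card ≤ r)
    (hdisj : ∀ p ∈ F, ∀ q ∈ F, p ≠ q → ∀ v : V, (v = p.1 ∨ v ∈ p.2) → ¬(v = q.1 ∨ v ∈ q.2)) :
    ∃ φ : Fin s → Fin 2 → V,
      (∀ i, ∃ p ∈ F, φ i 1 = p.1 ∧ φ i 0 ∈ p.2) ∧
      (∀ v₁ ∈ F.biUnion fun p => p.2,
        ((∑ i, if φ i 0 = v₁ then a i 0 else 0 : ℕ) : ℝ)
          ≤ (t₁ : ℝ) / forkSize F + Real.sqrt (12 * (t₁ + t₂) * S * forkSize F)) ∧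
      (∀ v₂ ∈ F.image fun p => p.1,
        ((∑ i, if φ i 1 = v₂ then a i 1 else 0 : ℕ) : ℝ)
          ≤ (r : ℝ) * t₂ / forkSize F + Real.sqrt (12 * (t₁ + t₂) * S * forkSize F)) := by
  have hdisj : ForksDisjoint F := hdisj
  obtain ⟨φ, hφ, hprong, hcenter⟩ := hdisj.exists_assignment_load_le hF
    (fun p hp => (hfork p hp).1) univ (fun i => (a i 0 : ℝ)) (fun i => (a i 1 : ℝ))
  have hD : ∑ i, ((a i 0 : ℝ) ^ 2 + (a i 1 : ℝ) ^ 2) ≤ S * (t₁ + t₂) := by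
    refine (sum_sq_add_sq_le_mul (S := S) (fun _ _ => by positivity) (fun _ _ => by positivity)
      fun i _ => by exact_mod_cast haS i).trans ?_
    rw [sum_add_distrib]
    gcongr
    exacts [by exact_mod_cast hsum1, by exact_mod_cast hsum2]
  have hroot : ∀ w : ℕ, w ≤ forkSize F →
      √(w * ∑ i, ((a i 0 : ℝ) ^ 2 + (a i 1 : ℝ) ^ 2)) ≤ √(12 * (t₁ + t₂) * S * forkSize F) := by
    intro w hw
    have hw : (w : ℝ) ≤ forkSize F := by exact_mod_cast hw
    apply Real.sqrt_le_sqrt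
    nlinarith [(sum_nonneg fun i _ => by positivity :
      (0 : ℝ) ≤ ∑ i, ((a i 0 : ℝ) ^ 2 + (a i 1 : ℝ) ^ 2))]
  refine ⟨φ, fun i => hφ i (mem_univ i), fun v hv => ?_, fun c hc => ?_⟩
  · obtain ⟨p, hp, -⟩ := mem_biUnion.1 hv
    have hf₁ : 1 ≤ forkSize F := (hfork p hp).1.card_pos.trans_le (card_le_forkSize hp)
    rw [natCast_sum_ite_eq_load]
    refine (hprong v hv).trans (add_le_add ?_ (by simpa using hroot 1 hf₁))
    gcongr
    exact_mod_cast hsum1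
  · obtain ⟨p, hp, rfl⟩ := mem_image.1 hc
    rw [natCast_sum_ite_eq_load]
    refine (hcenter p hp).trans (add_le_add ?_ (hroot _ (card_le_forkSize hp)))
    rw [← mul_div_assoc]
    gcongr
    · exact_mod_cast (hfork p hp).2.2
    · exact_mod_cast hsum2

/-- Lemma 5.3. Distribution of weights over a nonempty fork system of
ratio at most `r`, respecting its center–prong edges, with prongs receiving at most
`t₁/|F| + √(12tS|F|)` and centers at most `r·t₂/|F| + √(12tS|F|)`. -/
theorem stmt9 {V : Type} [DecidableEq V] (s t₁ t₂ S r : ℕ) (a : Fin s → Fin 2 → ℕ)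
    (hsum1 : (∑ i, a i 0) ≤ t₁) (hsum2 : (∑ i, a i 1) ≤ t₂)
    (hSt : S ≤ t₁ + t₂) (haS : ∀ i, a i 0 + a i 1 ≤ S)
    (F : Finset (V × Finset V)) (hF : F.Nonempty)
    (hfork : ∀ p ∈ F, p.2.Nonempty ∧ p.1 ∉ p.2 ∧ p.2.card ≤ r)
    (hdisj : ∀ p ∈ F, ∀ q ∈ F, p ≠ q → ∀ v : V, (v = p.1 ∨ v ∈ p.2) → ¬(v = q.1 ∨ v ∈ q.2))
    (hV12 : (F.image fun p => p.1).card ≤ (F.biUnion fun p => p.2).card) :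
    ∃ φ : Fin s → Fin 2 → V,
      (∀ i, ∃ p ∈ F, φ i 1 = p.1 ∧ φ i 0 ∈ p.2) ∧
      (∀ v₁ ∈ F.biUnion fun p => p.2,
        ((∑ i, if φ i 0 = v₁ then a i 0 else 0 : ℕ) : ℝ)
          ≤ (t₁ : ℝ) / forkSize F + Real.sqrt (12 * (t₁ + t₂) * S * forkSize F)) ∧
      (∀ v₂ ∈ F.image fun p => p.1,
        ((∑ i, if φ i 1 = v₂ then a i 1 else 0 : ℕ) : ℝ)
          ≤ (r : ℝ) * t₂ / forkSize F + Real.sqrt (12 * (t₁ + t₂) * S * forkSize F)) :=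
  stmt9_general s t₁ t₂ S r a hsum1 hsum2 haS F hF hfork hdisj
end

section
/- Let K ∈ 𝒦ηₙ have partition classes A, B, C and let A' ⊆ A, B' ⊆ B, C' ⊆ C. If |A'| > 2ηn, |B'| > 2ηn and |C'| > 2ηn, then K contains a triangle with one vertex in each of A', B', C'. -/
open SimpleGraph

/-!
A vertex `v` of `K` has no neighbour in its own class, so those `n` vertices and the
non-neighbours of `v` in another class all lie among the fewer than `(1 + η)n` non-neighbours
of `v`: it misses fewer than `ηn` vertices of each other class. Hence any `a ∈ A'` has a
neighbour `b ∈ B'`, and `a`, `b` together miss fewer than `2ηn < |C'|` vertices of `C'`.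
-/

open Finset

theorem Finset.card_filter_sigma_fst_eq {ι α : Type*} [Fintype ι] [DecidableEq ι] [Fintype α]
    (i : ι) : #{u : Σ _ : ι, α | u.1 = i} = Fintype.card α := by
  rw [show ({u | u.1 = i} : Finset (Σ _ : ι, α)) = univ.map ⟨Sigma.mk i, sigma_mk_injective⟩ by
    ext ⟨j, x⟩; simp [eq_comm]]
  simp

namespace KK

variable {n : ℕ} {η : ℝ} {K : SimpleGraph (TriV n)}

theorem lt_degree [DecidableRel K.Adj] (hK : KK n η K) (v : TriV n) :
    (2 - η) * n < K.degree v := by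
  have hdeg : ({u | K.Adj v u} : Set (TriV n)).ncard = K.degree v := by
    rw [← card_neighborFinset_eq_degree, ← Set.ncard_coe_finset, coe_neighborFinset]
    rfl
  exact hdeg ▸ hK.2 v

theorem card_filter_not_adj_lt [DecidableRel K.Adj] (hK : KK n η K) (v : TriV n) {j : Fin 3}
    (hj : j ≠ v.1) {S : Finset (TriV n)} (hS : ∀ u ∈ S, u.1 = j) :
    (#{u ∈ S | ¬K.Adj v u} : ℝ) < η * n := by
  set T := {u ∈ S | ¬K.Adj v u}
  have hsub : ({u | u.1 = v.1} : Finset (TriV n)) ∪ T ⊆ (K.neighborFinset v)ᶜ := by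
    intro u hu
    rw [mem_compl, mem_neighborFinset]
    intro hvu
    rcases mem_union.1 hu with hu | hu
    · exact hK.1 hvu (mem_filter.1 hu).2.symm
    · exact (mem_filter.1 hu).2 hvu
  have hdisj : Disjoint ({u | u.1 = v.1} : Finset (TriV n)) T :=
    disjoint_left.2 fun u hu hu' =>
      hj ((hS u (mem_filter.1 hu').1).symm.trans (mem_filter.1 hu).2)
  have hcard : n + #T + K.degree v ≤ 3 * n := by
    have h := card_le_card hsub
    rw [card_union_of_disjoint hdisj, card_filter_sigma_fst_eq, Fintype.card_fin, card_compl,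
      card_neighborFinset_eq_degree] at h
    have hlt := K.degree_lt_card_verts v
    simp only [Fintype.card_sigma, Fintype.card_fin, sum_const, card_univ, smul_eq_mul] at h hlt
    omega
  have hdeg := hK.lt_degree v
  have hcard' : (n : ℝ) + #T + K.degree v ≤ 3 * n := by exact_mod_cast hcard
  linarith

theorem eta_mul_nonneg (hK : KK n η K) : 0 ≤ η * n := by
  classical
  rcases Nat.eq_zero_or_pos n with rfl | hn
  · simp
  · have := hK.card_filter_not_adj_lt (j := 1) ⟨0, ⟨0, hn⟩⟩ one_ne_zero (S := {u | u.1 = 1})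
      fun u hu => (mem_filter.1 hu).2
    exact ((Nat.cast_nonneg _).trans_lt this).le

theorem exists_mem_adj (hK : KK n η K) (v : TriV n) {j : Fin 3} (hj : j ≠ v.1)
    {S : Finset (TriV n)} (hS : ∀ u ∈ S, u.1 = j) (hcard : η * n < #S) :
    ∃ u ∈ S, K.Adj v u := by
  classical
  by_contra! h
  have := hK.card_filter_not_adj_lt v hj hS
  rw [filter_true_of_mem h] at this
  linarith

theorem exists_mem_adj_adj (hK : KK n η K) (v w : TriV n) {j : Fin 3} (hv : j ≠ v.1)
    (hw : j ≠ w.1) {S : Finset (TriV n)} (hS : ∀ u ∈ S, u.1 = j) (hcard : 2 * η * n < #S) :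
    ∃ u ∈ S, K.Adj v u ∧ K.Adj w u := by
  classical
  by_contra! h
  have hsub : S ⊆ {u ∈ S | ¬K.Adj v u} ∪ {u ∈ S | ¬K.Adj w u} := by
    intro u hu
    by_cases hvu : K.Adj v u
    · exact mem_union_right _ (mem_filter.2 ⟨hu, h u hu hvu⟩)
    · exact mem_union_left _ (mem_filter.2 ⟨hu, hvu⟩)
  have hv' := hK.card_filter_not_adj_lt v hv hS
  have hw' := hK.card_filter_not_adj_lt w hw hS
  have : (#S : ℝ) ≤ #{u ∈ S | ¬K.Adj v u} + #{u ∈ S | ¬K.Adj w u} := by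
    exact_mod_cast (card_le_card hsub).trans (card_union_le _ _)
  linarith

end KK

/-- Proposition 6.3(c). If `|A'|,|B'|,|C'| > 2ηn` then `K` contains a
triangle with one vertex in each of `A'`, `B'`, `C'`. -/
theorem stmt16 (n : ℕ) (η : ℝ) (K : SimpleGraph (TriV n)) (hK : KK n η K)
    (A' B' C' : Finset (TriV n))
    (hA : ∀ v ∈ A', v.1 = 0) (hB : ∀ v ∈ B', v.1 = 1) (hC : ∀ v ∈ C', v.1 = 2)
    (hcardA : 2 * η * n < (A'.card : ℝ)) (hcardB : 2 * η * n < (B'.card : ℝ))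
    (hcardC : 2 * η * n < (C'.card : ℝ)) :
    ∃ a ∈ A', ∃ b ∈ B', ∃ c ∈ C', K.Adj a b ∧ K.Adj b c ∧ K.Adj a c := by
  have hηn := hK.eta_mul_nonneg
  obtain ⟨a, ha⟩ : A'.Nonempty := card_pos.1 (by exact_mod_cast (by linarith : (0 : ℝ) < #A'))
  obtain ⟨b, hb, hab⟩ := hK.exists_mem_adj a (by rw [hA a ha]; decide) hB (by linarith)
  obtain ⟨c, hc, hac, hbc⟩ :=
    hK.exists_mem_adj_adj a b (by rw [hA a ha]; decide) (by rw [hB b hb]; decide) hC hcardC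
  exact ⟨a, ha, b, hb, c, hc, hab, hbc, hac⟩
end
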